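/- Let Θ ∈ (π, 2π), λ ∈ ℝ with λ ∉ (π/Θ)ℤ, j ∈ ℕ, and a, b ∈ ℝ. Then there exist functions g_k ∈ C^∞([0,π]) ∩ C^∞([π,Θ]) for 0 ≤ k ≤ j such that v(R,θ) = R^λ ∑_{k=0}^{j} (ln R)^k g_k(θ) is harmonic on both subcones {0<θ<π} and {π<θ<Θ}, satisfies ∂_θ v = 0 at θ = 0 and θ = Θ, and has prescribed jumps [v]_{θ=π} = a R^λ (ln R)^j and [∂_θ v]_{θ=π} = b R^λ (ln R)^j across the interface θ = π. -/

import Mathlib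

open Real Set Finset

open Complex (I)

noncomputable def Pf (lam s : ℝ) (q : ℕ) (θ : ℝ) : ℂ :=
  (I * ((θ : ℂ) - s)) ^ q * Complex.exp (I * lam * ((θ : ℂ) - s))

noncomputable def co (γ : ℕ → ℝ) (k q : ℕ) : ℝ := γ (k + q) / (Nat.factorial k * Nat.factorial q)

noncomputable def cg (lam s : ℝ) (γ : ℕ → ℝ) (j k : ℕ) (θ : ℝ) : ℂ :=
  ∑ q ∈ Finset.range (j+1), (co γ k q : ℂ) * Pf lam s q θ

noncomputable def cgd (lam s : ℝ) (γ : ℕ → ℝ) (j k : ℕ) (θ : ℝ) : ℂ :=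
  ∑ q ∈ Finset.range (j+1), (co γ k q : ℂ) *
    (I * lam * Pf lam s q θ + q * I * Pf lam s (q-1) θ)

noncomputable def cgdd (lam s : ℝ) (γ : ℕ → ℝ) (j k : ℕ) (θ : ℝ) : ℂ :=
  ∑ q ∈ Finset.range (j+1), (co γ k q : ℂ) *
    (-(lam:ℂ)^2 * Pf lam s q θ - 2*lam*q*Pf lam s (q-1) θ
      - (q:ℂ)*((q-1 : ℕ):ℂ)*Pf lam s (q-2) θ)

lemma hasDerivAt_Pf (lam s : ℝ) (q : ℕ) (θ : ℝ) :
    HasDerivAt (fun t : ℝ => Pf lam s q t)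
      (I * lam * Pf lam s q θ + q * I * Pf lam s (q-1) θ) θ := by
  have hb : HasDerivAt (fun t : ℝ => ((t:ℂ) - s)) 1 θ := by
    simpa using (Complex.ofRealCLM.hasDerivAt (x := θ)).sub_const (s:ℂ)
  have h1 : HasDerivAt (fun t : ℝ => I * ((t:ℂ) - s)) I θ := by
    simpa using hb.const_mul I
  have h2 : HasDerivAt (fun t : ℝ => (I*((t:ℂ)-s))^q) ((q:ℂ) * (I*((θ:ℂ)-s))^(q-1) * I) θ := by
    have := ((hasDerivAt_pow q (I*((θ:ℂ)-s))).hasFDerivAt.restrictScalars ℝ).comp_hasDerivAt θ h1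
    simpa [mul_comm, Function.comp_def] using this
  have h3 : HasDerivAt (fun t : ℝ => Complex.exp (I * lam * ((t:ℂ) - s)))
      (Complex.exp (I*lam*((θ:ℂ)-s)) * (I*lam)) θ := by
    have h4 : HasDerivAt (fun t : ℝ => I * (lam:ℂ) * ((t:ℂ)-s)) (I*lam) θ := by
      simpa using hb.const_mul (I*(lam:ℂ))
    exact h4.cexp
  have h5 := h2.mul h3
  refine h5.congr_deriv ?_
  unfold Pf
  ring

lemma hasDerivAt_cg (lam s : ℝ) (γ : ℕ → ℝ) (j k : ℕ) (θ : ℝ) :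
    HasDerivAt (fun t => cg lam s γ j k t) (cgd lam s γ j k θ) θ := by
  unfold cg cgd
  exact HasDerivAt.fun_sum fun q _ => (hasDerivAt_Pf lam s q θ).const_mul _

lemma hasDerivAt_cgd (lam s : ℝ) (γ : ℕ → ℝ) (j k : ℕ) (θ : ℝ) :
    HasDerivAt (fun t => cgd lam s γ j k t) (cgdd lam s γ j k θ) θ := by
  unfold cgd cgdd
  apply HasDerivAt.fun_sum
  intro q _
  have h1 := hasDerivAt_Pf lam s q θ
  have h2 := hasDerivAt_Pf lam s (q-1) θ
  have h3 := ((h1.const_mul (I*(lam:ℂ))).add (h2.const_mul ((q:ℂ)*I))).const_mul ((co γ k q : ℝ) : ℂ)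
  refine h3.congr_deriv ?_
  symm
  rw [show q - 1 - 1 = q - 2 from by omega]
  linear_combination (-(co γ k q : ℂ) * ((lam:ℂ)^2*Pf lam s q θ + 2*lam*q*Pf lam s (q-1) θ
    + (q:ℂ)*((q-1:ℕ):ℂ)*Pf lam s (q-2) θ)) * Complex.I_sq

lemma re_hasDeriv {f : ℝ → ℂ} {f' : ℂ} {x : ℝ} (h : HasDerivAt f f' x) :
    HasDerivAt (fun t => (f t).re) f'.re x := by
  simpa [Function.comp_def] using (Complex.reCLM.hasFDerivAt.comp_hasDerivAt x h)

lemma contDiff_cg_re (lam s : ℝ) (γ : ℕ → ℝ) (j k : ℕ) :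
    ContDiff ℝ (⊤ : ℕ∞) (fun θ : ℝ => (cg lam s γ j k θ).re) := by
  have hb : ContDiff ℝ (⊤ : ℕ∞) (fun θ : ℝ => ((θ:ℂ) - s)) :=
    Complex.ofRealCLM.contDiff.sub contDiff_const
  have hP : ∀ q, ContDiff ℝ (⊤ : ℕ∞) (fun θ : ℝ => Pf lam s q θ) := fun q =>
    ((contDiff_const.mul hb).pow q).mul (Complex.contDiff_exp.comp (contDiff_const.mul hb))
  have : ContDiff ℝ (⊤ : ℕ∞) (fun θ : ℝ => cg lam s γ j k θ) :=
    ContDiff.sum fun q _ => contDiff_const.mul (hP q)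
  exact Complex.reCLM.contDiff.comp this

lemma cg_eq_zero (lam s : ℝ) (γ : ℕ → ℝ) (j k : ℕ) (θ : ℝ)
    (hγ : ∀ m, j < m → γ m = 0) (hk : j < k) : cg lam s γ j k θ = 0 := by
  unfold cg
  refine Finset.sum_eq_zero fun q _ => ?_
  have : co γ k q = 0 := by unfold co; rw [hγ _ (by omega)]; simp
  rw [this]; simp

lemma sum_shift (n : ℕ) (f g : ℕ → ℂ) (h0 : g 0 = 0) (hstep : ∀ k, g (k+1) = f k)
    (htop : f n = 0) :
    ∑ k ∈ Finset.range (n+1), g k = ∑ k ∈ Finset.range (n+1), f k := by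
  rw [Finset.sum_range_succ' g n, Finset.sum_range_succ f n, h0, htop, add_zero, add_zero]
  exact Finset.sum_congr rfl fun k _ => hstep k

lemma co_succ (γ : ℕ → ℝ) (k q : ℕ) :
    ((k:ℝ)+1) * co γ (k+1) q = ((q:ℝ)+1) * co γ k (q+1) := by
  unfold co
  rw [show k+1+q = k+(q+1) from by omega, Nat.factorial_succ k, Nat.factorial_succ q]
  have h1 : (k.factorial : ℝ) ≠ 0 := Nat.cast_ne_zero.mpr k.factorial_ne_zero
  have h2 : (q.factorial : ℝ) ≠ 0 := Nat.cast_ne_zero.mpr q.factorial_ne_zero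
  have h3 : (k:ℝ)+1 ≠ 0 := by positivity
  have h4 : (q:ℝ)+1 ≠ 0 := by positivity
  push_cast
  field_simp

lemma co_succ2 (γ : ℕ → ℝ) (k q : ℕ) :
    ((k:ℝ)+2)*((k:ℝ)+1) * co γ (k+2) q = ((q:ℝ)+2)*((q:ℝ)+1) * co γ k (q+2) := by
  unfold co
  rw [show k+2+q = k+(q+2) from by omega, Nat.factorial_succ (k+1), Nat.factorial_succ k,
    Nat.factorial_succ (q+1), Nat.factorial_succ q]
  have h1 : (k.factorial : ℝ) ≠ 0 := Nat.cast_ne_zero.mpr k.factorial_ne_zero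
  have h2 : (q.factorial : ℝ) ≠ 0 := Nat.cast_ne_zero.mpr q.factorial_ne_zero
  have h3 : (k:ℝ)+1 ≠ 0 := by positivity
  have h4 : (q:ℝ)+1 ≠ 0 := by positivity
  have h5 : (k:ℝ)+2 ≠ 0 := by positivity
  have h6 : (q:ℝ)+2 ≠ 0 := by positivity
  push_cast
  field_simp
  ring

noncomputable def Sq1 (lam s : ℝ) (γ : ℕ → ℝ) (j k : ℕ) (θ : ℝ) : ℂ :=
  ∑ q ∈ Finset.range (j+1), (q:ℂ) * (co γ k q : ℂ) * Pf lam s (q-1) θ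

noncomputable def Sq2 (lam s : ℝ) (γ : ℕ → ℝ) (j k : ℕ) (θ : ℝ) : ℂ :=
  ∑ q ∈ Finset.range (j+1), (q:ℂ) * ((q-1:ℕ):ℂ) * (co γ k q : ℂ) * Pf lam s (q-2) θ

lemma co_top_zero (γ : ℕ → ℝ) (j k m : ℕ) (hγ : ∀ m, j < m → γ m = 0) (hm : j < k + m) :
    co γ k m = 0 := by
  unfold co; rw [hγ _ (by omega)]; simp

lemma shiftA (lam s : ℝ) (γ : ℕ → ℝ) (j : ℕ) (hγ : ∀ m, j < m → γ m = 0) (L : ℂ) (θ : ℝ) :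
    (∑ k ∈ Finset.range (j+1), (k:ℂ)*L^(k-1)*cg lam s γ j k θ)
      = ∑ k ∈ Finset.range (j+1), L^k * Sq1 lam s γ j k θ := by
  have hA := sum_shift j (fun k => ((k:ℂ)+1) * L^k * cg lam s γ j (k+1) θ)
    (fun k => (k:ℂ)*L^(k-1)*cg lam s γ j k θ) (by simp)
    (fun k => by push_cast [Nat.add_sub_cancel]; ring)
    (by beta_reduce; rw [cg_eq_zero lam s γ j (j+1) θ hγ (by omega)]; ring)
  beta_reduce at hA
  rw [hA]
  refine Finset.sum_congr rfl fun k hk => ?_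
  have hB := sum_shift j (fun q => ((q:ℂ)+1) * (co γ k (q+1):ℂ) * Pf lam s q θ)
    (fun q => (q:ℂ) * (co γ k q : ℂ) * Pf lam s (q-1) θ) (by simp)
    (fun q => by push_cast [Nat.add_sub_cancel]; ring)
    (by beta_reduce; rw [co_top_zero γ j k (j+1) hγ (by omega)]; simp)
  beta_reduce at hB
  unfold Sq1
  rw [hB]
  unfold cg
  simp only [Finset.mul_sum]
  refine Finset.sum_congr rfl fun q hq => ?_
  have h := congrArg (Complex.ofReal) (co_succ γ k q)
  push_cast at h ⊢
  linear_combination (L^k * Pf lam s q θ) * h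

lemma shiftB (lam s : ℝ) (γ : ℕ → ℝ) (j : ℕ) (hγ : ∀ m, j < m → γ m = 0) (L : ℂ) (θ : ℝ) :
    (∑ k ∈ Finset.range (j+1), (k:ℂ)*((k-1:ℕ):ℂ)*L^(k-2)*cg lam s γ j k θ)
      = ∑ k ∈ Finset.range (j+1), L^k * Sq2 lam s γ j k θ := by
  have hA := sum_shift j (fun k => ((k:ℂ)+1) * (k:ℂ) * L^(k-1) * cg lam s γ j (k+1) θ)
    (fun k => (k:ℂ)*((k-1:ℕ):ℂ)*L^(k-2)*cg lam s γ j k θ) (by simp)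
    (fun k => by push_cast [Nat.add_sub_cancel, show ∀ k:ℕ, k+1-2 = k-1 from fun k => by omega]; ring)
    (by beta_reduce; rw [cg_eq_zero lam s γ j (j+1) θ hγ (by omega)]; ring)
  have hA2 := sum_shift j (fun k => ((k:ℂ)+2) * ((k:ℂ)+1) * L^k * cg lam s γ j (k+2) θ)
    (fun k => ((k:ℂ)+1) * (k:ℂ) * L^(k-1) * cg lam s γ j (k+1) θ) (by simp)
    (fun k => by push_cast [Nat.add_sub_cancel]; ring)
    (by beta_reduce; rw [cg_eq_zero lam s γ j (j+2) θ hγ (by omega)]; ring)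
  beta_reduce at hA hA2
  rw [hA, hA2]
  refine Finset.sum_congr rfl fun k hk => ?_
  have hB := sum_shift j (fun q => ((q:ℂ)+1) * (q:ℂ) * (co γ k (q+1):ℂ) * Pf lam s (q-1) θ)
    (fun q => (q:ℂ) * ((q-1:ℕ):ℂ) * (co γ k q : ℂ) * Pf lam s (q-2) θ) (by simp)
    (fun q => by push_cast [Nat.add_sub_cancel, show ∀ q:ℕ, q+1-2 = q-1 from fun q => by omega]; ring)
    (by beta_reduce; rw [co_top_zero γ j k (j+1) hγ (by omega)]; simp)
  have hB2 := sum_shift j (fun q => ((q:ℂ)+2) * ((q:ℂ)+1) * (co γ k (q+2):ℂ) * Pf lam s q θ)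
    (fun q => ((q:ℂ)+1) * (q:ℂ) * (co γ k (q+1):ℂ) * Pf lam s (q-1) θ) (by simp)
    (fun q => by push_cast [Nat.add_sub_cancel]; ring)
    (by beta_reduce; rw [co_top_zero γ j k (j+2) hγ (by omega)]; simp)
  beta_reduce at hB hB2
  unfold Sq2
  rw [hB, hB2]
  unfold cg
  simp only [Finset.mul_sum]
  refine Finset.sum_congr rfl fun q hq => ?_
  have h := congrArg (Complex.ofReal) (co_succ2 γ k q)
  push_cast at h ⊢
  linear_combination (L^k * Pf lam s q θ) * h

lemma key_complex (lam s : ℝ) (γ : ℕ → ℝ) (j : ℕ) (hγ : ∀ m, j < m → γ m = 0) (L : ℂ) (θ : ℝ) :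
    (∑ k ∈ Finset.range (j+1),
      ((lam:ℂ)^2*L^k + 2*lam*k*L^(k-1) + (k:ℂ)*((k-1:ℕ):ℂ)*L^(k-2)) * cg lam s γ j k θ)
    + ∑ k ∈ Finset.range (j+1), L^k * cgdd lam s γ j k θ = 0 := by
  have e2 := shiftA lam s γ j hγ L θ
  have e3 := shiftB lam s γ j hγ L θ
  have h1 : (∑ k ∈ Finset.range (j+1),
      ((lam:ℂ)^2*L^k + 2*lam*k*L^(k-1) + (k:ℂ)*((k-1:ℕ):ℂ)*L^(k-2)) * cg lam s γ j k θ)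
      = (lam:ℂ)^2 * (∑ k ∈ Finset.range (j+1), L^k * cg lam s γ j k θ)
        + 2*lam*(∑ k ∈ Finset.range (j+1), (k:ℂ)*L^(k-1)*cg lam s γ j k θ)
        + (∑ k ∈ Finset.range (j+1), (k:ℂ)*((k-1:ℕ):ℂ)*L^(k-2)*cg lam s γ j k θ) := by
    rw [Finset.mul_sum, Finset.mul_sum, ← Finset.sum_add_distrib, ← Finset.sum_add_distrib]
    exact Finset.sum_congr rfl fun k _ => by ring
  have h2 : (∑ k ∈ Finset.range (j+1), L^k * cgdd lam s γ j k θ)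
      + ((lam:ℂ)^2 * (∑ k ∈ Finset.range (j+1), L^k * cg lam s γ j k θ)
        + 2*lam*(∑ k ∈ Finset.range (j+1), L^k * Sq1 lam s γ j k θ)
        + (∑ k ∈ Finset.range (j+1), L^k * Sq2 lam s γ j k θ)) = 0 := by
    rw [Finset.mul_sum, Finset.mul_sum, ← Finset.sum_add_distrib, ← Finset.sum_add_distrib,
      ← Finset.sum_add_distrib]
    refine Finset.sum_eq_zero fun k _ => ?_
    unfold cgdd cg Sq1 Sq2
    simp only [Finset.mul_sum]
    rw [← Finset.sum_add_distrib, ← Finset.sum_add_distrib, ← Finset.sum_add_distrib]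
    exact Finset.sum_eq_zero fun q _ => by ring
  linear_combination h1 + h2 + 2*lam*e2 + e3

lemma key_real (lam s : ℝ) (γ : ℕ → ℝ) (j : ℕ) (hγ : ∀ m, j < m → γ m = 0) (L θ : ℝ) :
    (∑ k ∈ Finset.range (j+1),
      (lam^2*L^k + 2*lam*k*L^(k-1) + (k:ℝ)*((k-1:ℕ):ℝ)*L^(k-2)) * (cg lam s γ j k θ).re)
    + ∑ k ∈ Finset.range (j+1), L^k * (cgdd lam s γ j k θ).re = 0 := by
  have hc := key_complex lam s γ j hγ (L:ℂ) θ
  have h1 : ∀ k : ℕ, (lam^2*L^k + 2*lam*k*L^(k-1) + (k:ℝ)*((k-1:ℕ):ℝ)*L^(k-2)) * (cg lam s γ j k θ).re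
      = (((lam:ℂ)^2*(L:ℂ)^k + 2*(lam:ℂ)*(k:ℂ)*(L:ℂ)^(k-1) + (k:ℂ)*((k-1:ℕ):ℂ)*(L:ℂ)^(k-2))
          * cg lam s γ j k θ).re := by
    intro k
    rw [show ((lam:ℂ)^2*(L:ℂ)^k + 2*(lam:ℂ)*(k:ℂ)*(L:ℂ)^(k-1) + (k:ℂ)*((k-1:ℕ):ℂ)*(L:ℂ)^(k-2))
      = (((lam^2*L^k + 2*lam*k*L^(k-1) + (k:ℝ)*((k-1:ℕ):ℝ)*L^(k-2) : ℝ)) : ℂ) from by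
        push_cast; ring]
    rw [Complex.re_ofReal_mul]
  have h2 : ∀ k : ℕ, (L:ℝ)^k * (cgdd lam s γ j k θ).re = ((L:ℂ)^k * cgdd lam s γ j k θ).re := by
    intro k
    rw [show ((L:ℂ)^k) = (((L^k : ℝ)) : ℂ) from by push_cast; ring, Complex.re_ofReal_mul]
  calc (∑ k ∈ Finset.range (j+1),
      (lam^2*L^k + 2*lam*k*L^(k-1) + (k:ℝ)*((k-1:ℕ):ℝ)*L^(k-2)) * (cg lam s γ j k θ).re)
    + ∑ k ∈ Finset.range (j+1), L^k * (cgdd lam s γ j k θ).re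
      = ((∑ k ∈ Finset.range (j+1),
          ((lam:ℂ)^2*(L:ℂ)^k + 2*(lam:ℂ)*(k:ℂ)*(L:ℂ)^(k-1) + (k:ℂ)*((k-1:ℕ):ℂ)*(L:ℂ)^(k-2))
            * cg lam s γ j k θ)
        + ∑ k ∈ Finset.range (j+1), (L:ℂ)^k * cgdd lam s γ j k θ).re := by
        rw [Complex.add_re, Complex.re_sum, Complex.re_sum]
        exact congrArg₂ (· + ·) (Finset.sum_congr rfl fun k _ => h1 k)
          (Finset.sum_congr rfl fun k _ => h2 k)
    _ = 0 := by rw [hc]; rfl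

lemma radial1 (lam : ℝ) (k : ℕ) {R : ℝ} (hR : 0 < R) :
    HasDerivAt (fun r : ℝ => r ^ lam * Real.log r ^ k)
      (R^(lam-1) * (lam * Real.log R ^ k + k * Real.log R ^ (k-1))) R := by
  have h1 : HasDerivAt (fun r : ℝ => r ^ lam) (lam * R^(lam-1)) R :=
    Real.hasDerivAt_rpow_const (Or.inl hR.ne')
  have h2 : HasDerivAt Real.log R⁻¹ R := Real.hasDerivAt_log hR.ne'
  have h3 : HasDerivAt (fun r : ℝ => Real.log r ^ k)
      ((k:ℝ) * Real.log R ^ (k-1) * R⁻¹) R := h2.pow k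
  have h4 := h1.mul h3
  have h5 : R^lam * R⁻¹ = R^(lam-1) := by
    rw [Real.rpow_sub hR, Real.rpow_one, div_eq_mul_inv]
  refine h4.congr_deriv ?_
  rw [← h5]
  field_simp

lemma radial2 (lam : ℝ) (k : ℕ) {R : ℝ} (hR : 0 < R) :
    HasDerivAt (fun r : ℝ => r^(lam-1) * (lam * Real.log r ^ k + k * Real.log r ^ (k-1)))
      (R^(lam-2) * (lam*(lam-1) * Real.log R ^ k + (2*lam-1)*k * Real.log R ^ (k-1)
        + (k:ℝ)*((k-1:ℕ):ℝ) * Real.log R ^ (k-2))) R := by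
  have h1 : HasDerivAt (fun r : ℝ => r ^ (lam-1)) ((lam-1) * R^(lam-1-1)) R :=
    Real.hasDerivAt_rpow_const (Or.inl hR.ne')
  have h2 : HasDerivAt Real.log R⁻¹ R := Real.hasDerivAt_log hR.ne'
  have h3 : HasDerivAt (fun r : ℝ => Real.log r ^ k)
      ((k:ℝ) * Real.log R ^ (k-1) * R⁻¹) R := h2.pow k
  have h3' : HasDerivAt (fun r : ℝ => Real.log r ^ (k-1))
      (((k-1:ℕ):ℝ) * Real.log R ^ (k-1-1) * R⁻¹) R := h2.pow (k-1)
  have h5 : R^(lam-1) * R⁻¹ = R^(lam-2) := by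
    rw [show lam-2 = lam-1-1 from by ring, Real.rpow_sub hR (lam-1) 1, Real.rpow_one,
      div_eq_mul_inv]
  have h6 : lam - 1 - 1 = lam - 2 := by ring
  rw [h6] at h1
  have h4 := h1.mul ((h3.const_mul lam).add (h3'.const_mul (k:ℝ)))
  have hRne : R ≠ 0 := hR.ne'
  have h7 : R^(lam-1) = R^(lam-2) * R := by
    rw [← h5]; field_simp
  refine h4.congr_deriv ?_
  rw [show k-1-1 = k-2 from by omega, h7]
  simp only [Pi.add_apply]
  field_simp
  ring

lemma Pf_zero_eq (lam s θ : ℝ) :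
    Pf lam s 0 θ = Complex.exp ((lam*(θ-s) : ℝ) * I) := by
  unfold Pf
  rw [pow_zero, one_mul]
  congr 1
  push_cast
  ring

lemma Pf_zero_re (lam s θ : ℝ) : (Pf lam s 0 θ).re = Real.cos (lam*(θ-s)) := by
  rw [Pf_zero_eq, Complex.exp_ofReal_mul_I_re]

lemma Pf_zero_d_re (lam s θ : ℝ) :
    (I * lam * Pf lam s 0 θ).re = -(lam * Real.sin (lam*(θ-s))) := by
  rw [Pf_zero_eq, Complex.exp_mul_I, ← Complex.ofReal_cos, ← Complex.ofReal_sin]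
  simp only [Complex.add_re, Complex.mul_re, Complex.mul_im, Complex.add_im, Complex.I_re,
    Complex.I_im, Complex.ofReal_re, Complex.ofReal_im]
  ring

lemma Pf_self (lam s : ℝ) (q : ℕ) : Pf lam s q s = if q = 0 then 1 else 0 := by
  unfold Pf
  have h0 : ((s:ℂ) - s) = 0 := by ring
  rw [h0]
  rcases q with _ | n
  · simp
  · simp [zero_pow (Nat.succ_ne_zero n)]

lemma cgd_self_re (lam s : ℝ) (γ : ℕ → ℝ) (j k : ℕ) : (cgd lam s γ j k s).re = 0 := by
  unfold cgd
  rw [Complex.re_sum]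
  refine Finset.sum_eq_zero fun q _ => ?_
  rcases q with _ | _ | n <;>
    simp [Pf_self, Complex.mul_re, Complex.mul_im, Complex.add_re, Complex.add_im,
      Complex.I_re, Complex.I_im, Complex.ofReal_re, Complex.ofReal_im]

lemma cg_congr_ge (lam s : ℝ) (γ γ' : ℕ → ℝ) (j k : ℕ) (θ : ℝ)
    (h : ∀ m, k ≤ m → γ' m = γ m) : cg lam s γ' j k θ = cg lam s γ j k θ := by
  unfold cg
  refine Finset.sum_congr rfl fun q _ => ?_
  unfold co
  rw [h _ (by omega)]

lemma cgd_congr_ge (lam s : ℝ) (γ γ' : ℕ → ℝ) (j k : ℕ) (θ : ℝ)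
    (h : ∀ m, k ≤ m → γ' m = γ m) : cgd lam s γ' j k θ = cgd lam s γ j k θ := by
  unfold cgd
  refine Finset.sum_congr rfl fun q _ => ?_
  unfold co
  rw [h _ (by omega)]

lemma cg_update (lam s : ℝ) (γ : ℕ → ℝ) (j k : ℕ) (θ : ℝ) (t : ℝ) (hk : γ k = 0) :
    cg lam s (Function.update γ k t) j k θ
      = cg lam s γ j k θ + ((t / k.factorial : ℝ) : ℂ) * Pf lam s 0 θ := by
  unfold cg
  rw [Finset.sum_range_succ' _ j, Finset.sum_range_succ' _ j]
  have h1 : ∀ q, co (Function.update γ k t) k (q+1) = co γ k (q+1) := by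
    intro q
    unfold co
    rw [Function.update_of_ne (by omega)]
  have h2 : co (Function.update γ k t) k 0 = t / k.factorial := by
    unfold co
    rw [Nat.add_zero, Function.update_self, Nat.factorial_zero]
    push_cast
    ring_nf
  have h3 : co γ k 0 = 0 := by
    unfold co
    rw [Nat.add_zero, hk]
    simp
  rw [h2, h3]
  simp only [h1]
  push_cast
  ring

lemma cgd_update (lam s : ℝ) (γ : ℕ → ℝ) (j k : ℕ) (θ : ℝ) (t : ℝ) (hk : γ k = 0) :
    cgd lam s (Function.update γ k t) j k θ
      = cgd lam s γ j k θ + ((t / k.factorial : ℝ) : ℂ) * (I * lam * Pf lam s 0 θ) := by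
  unfold cgd
  rw [Finset.sum_range_succ' _ j, Finset.sum_range_succ' _ j]
  have h1 : ∀ q, co (Function.update γ k t) k (q+1) = co γ k (q+1) := by
    intro q
    unfold co
    rw [Function.update_of_ne (by omega)]
  have h2 : co (Function.update γ k t) k 0 = t / k.factorial := by
    unfold co
    rw [Nat.add_zero, Function.update_self, Nat.factorial_zero]
    push_cast
    ring_nf
  have h3 : co γ k 0 = 0 := by
    unfold co
    rw [Nat.add_zero, hk]
    simp
  rw [h2, h3]
  simp only [h1]
  push_cast
  ring

lemma solve2 (C₁ D₁ C₂ D₂ r s : ℝ) (hdet : C₁*D₂ - C₂*D₁ ≠ 0) :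
    ∃ t₁ t₂ : ℝ, t₂*C₂ - t₁*C₁ = r ∧ t₂*D₂ - t₁*D₁ = s := by
  have hdet' : C₁*D₂ - D₁*C₂ ≠ 0 := by rwa [mul_comm D₁]
  refine ⟨(s*C₂ - r*D₂)/(C₁*D₂ - C₂*D₁), (s*C₁ - r*D₁)/(C₁*D₂ - C₂*D₁), ?_, ?_⟩ <;>
    field_simp <;> ring

lemma exists_coeffs (lam sΘ : ℝ) (j : ℕ) (a b : ℝ)
    (hdet : (Pf lam 0 0 π).re * (I * lam * Pf lam sΘ 0 π).re
      - (Pf lam sΘ 0 π).re * (I * lam * Pf lam 0 0 π).re ≠ 0) :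
    ∃ γ δ : ℕ → ℝ, (∀ m, j < m → γ m = 0) ∧ (∀ m, j < m → δ m = 0) ∧
      ∀ k, k ≤ j →
        ((cg lam sΘ δ j k π).re - (cg lam 0 γ j k π).re = if k = j then a else 0) ∧
        ((cgd lam sΘ δ j k π).re - (cgd lam 0 γ j k π).re = if k = j then b else 0) := by
  set C₁ := (Pf lam 0 0 π).re with hC₁
  set D₁ := (I * lam * Pf lam 0 0 π).re with hD₁
  set C₂ := (Pf lam sΘ 0 π).re with hC₂
  set D₂ := (I * lam * Pf lam sΘ 0 π).re with hD₂
  have aux : ∀ m : ℕ, ∃ γ δ : ℕ → ℝ,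
      (∀ i, j < i → γ i = 0 ∧ δ i = 0) ∧ (∀ i, i + m ≤ j → γ i = 0 ∧ δ i = 0) ∧
      (∀ k, k ≤ j → j < k + m →
        ((cg lam sΘ δ j k π).re - (cg lam 0 γ j k π).re = if k = j then a else 0) ∧
        ((cgd lam sΘ δ j k π).re - (cgd lam 0 γ j k π).re = if k = j then b else 0)) := by
    intro m
    induction m with
    | zero =>
      exact ⟨fun _ => 0, fun _ => 0, by simp, by simp, fun k hk hk2 => absurd hk2 (by omega)⟩
    | succ m ih =>
      obtain ⟨γ, δ, hs1, hs2, hc⟩ := ih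
      by_cases hm : j < m
      · exact ⟨γ, δ, hs1, fun i hi => hs2 i (by omega), fun k hk _ => hc k hk (by omega)⟩
      · set k₀ := j - m with hk₀
        have hk₀m : k₀ + m = j := by omega
        have hγ0 : γ k₀ = 0 := (hs2 k₀ (by omega)).1
        have hδ0 : δ k₀ = 0 := (hs2 k₀ (by omega)).2
        obtain ⟨t₁, t₂, ht1, ht2⟩ := solve2 C₁ D₁ C₂ D₂
          ((if k₀ = j then a else 0) - ((cg lam sΘ δ j k₀ π).re - (cg lam 0 γ j k₀ π).re))
          ((if k₀ = j then b else 0) - ((cgd lam sΘ δ j k₀ π).re - (cgd lam 0 γ j k₀ π).re))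
          hdet
        have hfac : (k₀.factorial : ℝ) ≠ 0 := Nat.cast_ne_zero.mpr k₀.factorial_ne_zero
        have e1 : (k₀.factorial * t₁ : ℝ) / k₀.factorial = t₁ := by field_simp
        have e2 : (k₀.factorial * t₂ : ℝ) / k₀.factorial = t₂ := by field_simp
        refine ⟨Function.update γ k₀ (k₀.factorial * t₁),
          Function.update δ k₀ (k₀.factorial * t₂), ?_, ?_, ?_⟩
        · intro i hi
          rw [Function.update_of_ne (by omega), Function.update_of_ne (by omega)]
          exact hs1 i hi
        · intro i hi
          rw [Function.update_of_ne (by omega), Function.update_of_ne (by omega)]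
          exact hs2 i (by omega)
        · intro k hk hkm
          by_cases hnew : j < k + m
          · have hgt : k₀ < k := by omega
            rw [cg_congr_ge lam sΘ δ _ j k π (fun i hi => Function.update_of_ne (by omega) _ _),
              cg_congr_ge lam 0 γ _ j k π (fun i hi => Function.update_of_ne (by omega) _ _),
              cgd_congr_ge lam sΘ δ _ j k π (fun i hi => Function.update_of_ne (by omega) _ _),
              cgd_congr_ge lam 0 γ _ j k π (fun i hi => Function.update_of_ne (by omega) _ _)]
            exact hc k hk hnew
          · have hkk : k = k₀ := by omega
            rw [hkk]
            constructor
            · rw [cg_update lam sΘ δ j k₀ π _ hδ0, cg_update lam 0 γ j k₀ π _ hγ0,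
                Complex.add_re, Complex.add_re, Complex.re_ofReal_mul, Complex.re_ofReal_mul,
                e1, e2]
              rw [← hC₁, ← hC₂] at *
              linarith [ht1]
            · rw [cgd_update lam sΘ δ j k₀ π _ hδ0, cgd_update lam 0 γ j k₀ π _ hγ0,
                Complex.add_re, Complex.add_re, Complex.re_ofReal_mul, Complex.re_ofReal_mul,
                e1, e2]
              rw [← hD₁, ← hD₂] at *
              linarith [ht2]
  obtain ⟨γ, δ, hs1, hs2, hc⟩ := aux (j+1)
  exact ⟨γ, δ, fun m hm => (hs1 m hm).1, fun m hm => (hs1 m hm).2,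
    fun k hk => hc k hk (by omega)⟩

lemma derivWithin_formula (lam s : ℝ) (γ : ℕ → ℝ) (j : ℕ) {α β : ℝ} (hαβ : α < β)
    (v : ℝ → ℝ → ℝ)
    (hv : ∀ R θ : ℝ, v R θ = R ^ lam * ∑ k ∈ Finset.range (j+1),
      Real.log R ^ k * (cg lam s γ j k θ).re)
    (R : ℝ) {t : ℝ} (ht : t ∈ Set.Icc α β) :
    derivWithin (fun t' => v R t') (Set.Icc α β) t
      = R ^ lam * ∑ k ∈ Finset.range (j+1), Real.log R ^ k * (cgd lam s γ j k t).re := by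
  have hfun : (fun t' => v R t') = fun t' => R ^ lam * ∑ k ∈ Finset.range (j+1),
      Real.log R ^ k * (cg lam s γ j k t').re := funext fun t' => hv R t'
  have hd : HasDerivAt (fun t' => R ^ lam * ∑ k ∈ Finset.range (j+1),
      Real.log R ^ k * (cg lam s γ j k t').re)
      (R ^ lam * ∑ k ∈ Finset.range (j+1), Real.log R ^ k * (cgd lam s γ j k t).re) t :=
    HasDerivAt.const_mul _ (HasDerivAt.fun_sum fun k _ =>
      (re_hasDeriv (hasDerivAt_cg lam s γ j k t)).const_mul _)
  rw [hfun]
  exact hd.hasDerivWithinAt.derivWithin (uniqueDiffOn_Icc hαβ t ht)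

lemma harmonic_aux (lam s : ℝ) (γ : ℕ → ℝ) (j : ℕ) (hγ : ∀ m, j < m → γ m = 0)
    {α β : ℝ} (hαβ : α < β) (v : ℝ → ℝ → ℝ)
    (hv : ∀ R θ : ℝ, v R θ = R ^ lam * ∑ k ∈ Finset.range (j+1),
      Real.log R ^ k * (cg lam s γ j k θ).re)
    {R : ℝ} (hR : 0 < R) {θ : ℝ} (hθ : θ ∈ Set.Ioo α β) :
    deriv (fun r => deriv (fun r' => v r' θ) r) R + (1 / R) * deriv (fun r => v r θ) R
      + (1 / R ^ 2) * derivWithin (fun t => derivWithin (fun t' => v R t') (Set.Icc α β) t)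
          (Set.Icc α β) θ = 0 := by
  have hfunR : (fun r => v r θ) = fun r => ∑ k ∈ Finset.range (j+1),
      r ^ lam * Real.log r ^ k * (cg lam s γ j k θ).re := by
    funext r; rw [hv, Finset.mul_sum]; exact Finset.sum_congr rfl fun k _ => by ring
  have hBr : ∀ r, 0 < r → HasDerivAt (fun r' => v r' θ)
      (∑ k ∈ Finset.range (j+1),
        r^(lam-1) * (lam * Real.log r ^ k + k * Real.log r ^ (k-1))
          * (cg lam s γ j k θ).re) r := by
    intro r hr
    rw [hfunR]
    exact HasDerivAt.fun_sum fun k _ => (radial1 lam k hr).mul_const _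
  have hD1 : deriv (fun r => v r θ) R = ∑ k ∈ Finset.range (j+1),
      R^(lam-1) * (lam * Real.log R ^ k + k * Real.log R ^ (k-1)) * (cg lam s γ j k θ).re :=
    (hBr R hR).deriv
  have hEv : (fun r => deriv (fun r' => v r' θ) r) =ᶠ[nhds R]
      (fun r => ∑ k ∈ Finset.range (j+1),
        r^(lam-1) * (lam * Real.log r ^ k + k * Real.log r ^ (k-1))
          * (cg lam s γ j k θ).re) := by
    filter_upwards [Ioi_mem_nhds hR] with r hr
    exact (hBr r hr).deriv
  have hD2 : deriv (fun r => deriv (fun r' => v r' θ) r) R = ∑ k ∈ Finset.range (j+1),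
      R^(lam-2) * (lam*(lam-1) * Real.log R ^ k + (2*lam-1)*k * Real.log R ^ (k-1)
        + (k:ℝ)*((k-1:ℕ):ℝ) * Real.log R ^ (k-2)) * (cg lam s γ j k θ).re := by
    rw [hEv.deriv_eq]
    exact (HasDerivAt.fun_sum fun k _ => (radial2 lam k hR).mul_const _).deriv
  have hIcc : Set.Icc α β ∈ nhds θ := Icc_mem_nhds hθ.1 hθ.2
  have hθmem : θ ∈ Set.Icc α β := Set.mem_Icc_of_Ioo hθ
  have hin : ∀ t ∈ Set.Icc α β, derivWithin (fun t' => v R t') (Set.Icc α β) t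
      = R ^ lam * ∑ k ∈ Finset.range (j+1), Real.log R ^ k * (cgd lam s γ j k t).re :=
    fun t ht => derivWithin_formula lam s γ j hαβ v hv R ht
  have hD3 : derivWithin (fun t => derivWithin (fun t' => v R t') (Set.Icc α β) t)
      (Set.Icc α β) θ = R ^ lam * ∑ k ∈ Finset.range (j+1),
        Real.log R ^ k * (cgdd lam s γ j k θ).re := by
    rw [derivWithin_congr hin (hin θ hθmem), derivWithin_of_mem_nhds hIcc]
    exact (HasDerivAt.const_mul _ (HasDerivAt.fun_sum fun k _ =>
      (re_hasDeriv (hasDerivAt_cgd lam s γ j k θ)).const_mul _)).deriv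
  rw [hD1, hD2, hD3]
  have hRne : R ≠ 0 := hR.ne'
  have ha : (1/R) * R^(lam-1) = R^(lam-2) := by
    rw [Real.rpow_sub hR lam 1, Real.rpow_sub hR lam 2, Real.rpow_one,
      show (2:ℝ) = ((2:ℕ):ℝ) from by norm_num, Real.rpow_natCast, pow_two]
    field_simp
  have hb : (1/R^2) * R^lam = R^(lam-2) := by
    rw [Real.rpow_sub hR lam 2, show (2:ℝ) = ((2:ℕ):ℝ) from by norm_num, Real.rpow_natCast]
    field_simp
  have key := key_real lam s γ j hγ (Real.log R) θ
  have step1 : (1/R) * (∑ k ∈ Finset.range (j+1),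
      R^(lam-1) * (lam * Real.log R ^ k + k * Real.log R ^ (k-1)) * (cg lam s γ j k θ).re)
      = ∑ k ∈ Finset.range (j+1),
        R^(lam-2) * ((lam * Real.log R ^ k + k * Real.log R ^ (k-1))
          * (cg lam s γ j k θ).re) := by
    rw [Finset.mul_sum]
    refine Finset.sum_congr rfl fun k _ => ?_
    rw [← ha]; ring
  have step2 : (1/R^2) * (R^lam * ∑ k ∈ Finset.range (j+1),
      Real.log R ^ k * (cgdd lam s γ j k θ).re)
      = ∑ k ∈ Finset.range (j+1),
        R^(lam-2) * (Real.log R ^ k * (cgdd lam s γ j k θ).re) := by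
    rw [← mul_assoc, hb, Finset.mul_sum]
  rw [step1, step2, ← Finset.sum_add_distrib, ← Finset.sum_add_distrib]
  have final : ∑ k ∈ Finset.range (j+1),
      (R^(lam-2) * (lam*(lam-1) * Real.log R ^ k + (2*lam-1)*k * Real.log R ^ (k-1)
        + (k:ℝ)*((k-1:ℕ):ℝ) * Real.log R ^ (k-2)) * (cg lam s γ j k θ).re
      + R^(lam-2) * ((lam * Real.log R ^ k + k * Real.log R ^ (k-1)) * (cg lam s γ j k θ).re)
      + R^(lam-2) * (Real.log R ^ k * (cgdd lam s γ j k θ).re))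
      = R^(lam-2) * ((∑ k ∈ Finset.range (j+1),
          (lam^2*Real.log R ^k + 2*lam*k*Real.log R ^(k-1)
            + (k:ℝ)*((k-1:ℕ):ℝ)*Real.log R ^(k-2)) * (cg lam s γ j k θ).re)
        + ∑ k ∈ Finset.range (j+1), Real.log R ^k * (cgdd lam s γ j k θ).re) := by
    rw [mul_add, Finset.mul_sum, Finset.mul_sum, ← Finset.sum_add_distrib]
    exact Finset.sum_congr rfl fun k _ => by ring
  rw [final, key, mul_zero]

/-- Non-resonant interface lifting on the cone (Lemma `technical_lemma_sol`, case
`λ ∉ (π/Θ)ℤ`, `N = j`): there exist angular profiles `g_k`, smooth on `[0,π]` and on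
`[π,Θ]`, such that `v(R,θ) = R^λ ∑_{k≤j} (ln R)^k g_k(θ)` is harmonic on both subcones,
satisfies `∂_θ v = 0` at `θ = 0` and `θ = Θ`, and has prescribed jumps
`[v]_{θ=π} = a R^λ (ln R)^j`, `[∂_θ v]_{θ=π} = b R^λ (ln R)^j`. -/
theorem interface_lifting (Θ : ℝ) (hΘ : Θ ∈ Set.Ioo π (2 * π)) (lam : ℝ)
    (hres : ∀ n : ℤ, lam ≠ n * (π / Θ)) (j : ℕ) (a b : ℝ) :
    ∃ g₁ g₂ : ℕ → ℝ → ℝ,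
      (∀ k ≤ j, ContDiffOn ℝ (⊤ : ℕ∞) (g₁ k) (Set.Icc 0 π) ∧
        ContDiffOn ℝ (⊤ : ℕ∞) (g₂ k) (Set.Icc π Θ)) ∧
      ∀ v₁ v₂ : ℝ → ℝ → ℝ,
        (∀ R θ : ℝ, v₁ R θ = R ^ lam *
          ∑ k ∈ Finset.range (j + 1), (Real.log R) ^ k * g₁ k θ) →
        (∀ R θ : ℝ, v₂ R θ = R ^ lam *
          ∑ k ∈ Finset.range (j + 1), (Real.log R) ^ k * g₂ k θ) →
        -- harmonicity on the subcone `0 < θ < π`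
        (∀ R : ℝ, 0 < R → ∀ θ ∈ Set.Ioo (0 : ℝ) π,
          deriv (fun r => deriv (fun r' => v₁ r' θ) r) R
            + (1 / R) * deriv (fun r => v₁ r θ) R
            + (1 / R ^ 2) *
              derivWithin (fun t => derivWithin (fun t' => v₁ R t') (Set.Icc 0 π) t)
                (Set.Icc 0 π) θ = 0) ∧
        -- harmonicity on the subcone `π < θ < Θ`
        (∀ R : ℝ, 0 < R → ∀ θ ∈ Set.Ioo π Θ,
          deriv (fun r => deriv (fun r' => v₂ r' θ) r) R
            + (1 / R) * deriv (fun r => v₂ r θ) R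
            + (1 / R ^ 2) *
              derivWithin (fun t => derivWithin (fun t' => v₂ R t') (Set.Icc π Θ) t)
                (Set.Icc π Θ) θ = 0) ∧
        -- Neumann conditions at `θ = 0` and `θ = Θ`
        (∀ R : ℝ, 0 < R →
          derivWithin (fun t => v₁ R t) (Set.Icc 0 π) 0 = 0 ∧
          derivWithin (fun t => v₂ R t) (Set.Icc π Θ) Θ = 0) ∧
        -- prescribed jumps across the interface `θ = π`
        (∀ R : ℝ, 0 < R →
          v₂ R π - v₁ R π = a * R ^ lam * (Real.log R) ^ j ∧
          derivWithin (fun t => v₂ R t) (Set.Icc π Θ) π -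
            derivWithin (fun t => v₁ R t) (Set.Icc 0 π) π
            = b * R ^ lam * (Real.log R) ^ j) := by
  obtain ⟨hπΘ, hΘ2⟩ := hΘ
  have hπ : (0:ℝ) < π := Real.pi_pos
  have hlam0 : lam ≠ 0 := by
    have := hres 0
    simpa using this
  have hΘ0 : Θ ≠ 0 := (lt_trans hπ hπΘ).ne'
  have hsin : Real.sin (lam*Θ) ≠ 0 := by
    intro h
    obtain ⟨n, hn⟩ := Real.sin_eq_zero_iff.mp h
    refine hres n ?_
    field_simp
    linarith [hn]
  have hdet : (Pf lam 0 0 π).re * (I * lam * Pf lam Θ 0 π).re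
      - (Pf lam Θ 0 π).re * (I * lam * Pf lam 0 0 π).re ≠ 0 := by
    rw [Pf_zero_re, Pf_zero_re, Pf_zero_d_re, Pf_zero_d_re, sub_zero]
    have htrig : Real.cos (lam*π) * (-(lam * Real.sin (lam*(π-Θ))))
        - Real.cos (lam*(π-Θ)) * (-(lam * Real.sin (lam*π))) = lam * Real.sin (lam*Θ) := by
      rw [show lam*Θ = lam*π - lam*(π-Θ) from by ring, Real.sin_sub]
      ring
    rw [htrig]
    exact mul_ne_zero hlam0 hsin
  obtain ⟨γ, δ, hγ0, hδ0, hjump⟩ := exists_coeffs lam Θ j a b hdet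
  refine ⟨fun k θ => (cg lam 0 γ j k θ).re, fun k θ => (cg lam Θ δ j k θ).re, ?_, ?_⟩
  · intro k _
    exact ⟨(contDiff_cg_re lam 0 γ j k).contDiffOn, (contDiff_cg_re lam Θ δ j k).contDiffOn⟩
  intro v₁ v₂ hv₁ hv₂
  have hv₁' : ∀ R θ : ℝ, v₁ R θ = R ^ lam * ∑ k ∈ Finset.range (j+1),
      Real.log R ^ k * (cg lam 0 γ j k θ).re := hv₁
  have hv₂' : ∀ R θ : ℝ, v₂ R θ = R ^ lam * ∑ k ∈ Finset.range (j+1),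
      Real.log R ^ k * (cg lam Θ δ j k θ).re := hv₂
  have hsum : ∀ (c L : ℝ), (∑ k ∈ Finset.range (j+1), L^k * (if k = j then c else 0))
      = L^j * c := by
    intro c L
    have h1 : ∀ k ∈ Finset.range (j+1), L^k * (if k = j then c else 0)
        = if k = j then L^j*c else 0 := by
      intro k _
      by_cases h : k = j
      · subst h; simp
      · simp [h]
    rw [Finset.sum_congr rfl h1, Finset.sum_ite_eq' (Finset.range (j+1)) j (fun _ => L^j * c)]
    simp
  refine ⟨?_, ?_, ?_, ?_⟩
  · intro R hR θ hθ
    exact harmonic_aux lam 0 γ j hγ0 hπ v₁ hv₁' hR hθ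
  · intro R hR θ hθ
    exact harmonic_aux lam Θ δ j hδ0 hπΘ v₂ hv₂' hR hθ
  · intro R hR
    constructor
    · rw [derivWithin_formula lam 0 γ j hπ v₁ hv₁' R (Set.mem_Icc.mpr ⟨le_refl 0, hπ.le⟩)]
      rw [Finset.sum_eq_zero fun k _ => by rw [cgd_self_re]; ring]
      ring
    · rw [derivWithin_formula lam Θ δ j hπΘ v₂ hv₂' R (Set.mem_Icc.mpr ⟨hπΘ.le, le_refl Θ⟩)]
      rw [Finset.sum_eq_zero fun k _ => by rw [cgd_self_re]; ring]
      ring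
  · intro R hR
    constructor
    · rw [hv₂', hv₁', ← mul_sub, ← Finset.sum_sub_distrib]
      have h2 : ∀ k ∈ Finset.range (j+1),
          (Real.log R^k * (cg lam Θ δ j k π).re - Real.log R^k * (cg lam 0 γ j k π).re)
            = Real.log R^k * (if k = j then a else 0) := by
        intro k hk
        rw [← mul_sub, (hjump k (Finset.mem_range_succ_iff.mp hk)).1]
      rw [Finset.sum_congr rfl h2, hsum a (Real.log R)]
      ring
    · rw [derivWithin_formula lam Θ δ j hπΘ v₂ hv₂' R (Set.mem_Icc.mpr ⟨le_refl π, hπΘ.le⟩),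
        derivWithin_formula lam 0 γ j hπ v₁ hv₁' R (Set.mem_Icc.mpr ⟨hπ.le, le_refl π⟩),
        ← mul_sub, ← Finset.sum_sub_distrib]
      have h2 : ∀ k ∈ Finset.range (j+1),
          (Real.log R^k * (cgd lam Θ δ j k π).re - Real.log R^k * (cgd lam 0 γ j k π).re)
            = Real.log R^k * (if k = j then b else 0) := by
        intro k hk
        rw [← mul_sub, (hjump k (Finset.mem_range_succ_iff.mp hk)).2]
      rw [Finset.sum_congr rfl h2, hsum b (Real.log R)]
      ring
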